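/- Let (α, \hat{S}) be a crossed module admitting at least one extension. Then the cohomology group H^2(G/N, Z)_T acts simply transitively on the set Ext(α,\hat{S}) of equivalence classes of extensions of the crossed module, via ([β], [(\hat{N}×_{(f,σ)}G/N, \hat{α}_{(f,σ)})]) ↦ [(\hat{N}×_{(f·β,σ)}G/N, \hat{α}_{(f·β,σ)})]. -/

import Mathlib

/-!
The extension attached to a structural cocycle `(f, σ)` is `N̂ × G/N` with the twisted product
`(n, h)(m, k) = (n · Ŝ(σ h)(m) · f(h, k), h k)`; it is associative because `f` is a twisted
2-cocycle and `α ∘ f` measures the failure of `σ` to be multiplicative. An equivalence between two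
such extensions is forced to be a gauge map `(n, h) ↦ (n · c(h), h)`, and a gauge map is a
morphism exactly when `f₂(h, k) c(hk) = c(h) · Ŝ(σ₁ h)(c k) · f₁(h, k)`.
For transitivity, write a second section as `σ' = α(c) σ` and read `β` off this relation; `β` is a
cocycle since equivalences transport associativity. For `f·β` and `f·β'` the gauge `c` takes
values in `Z = ker α`, which is central, and the relation becomes `β⁻¹ β' = d c`.
-/

open Subgroup

theorem assoc_of_surjective_hom {X Y : Type*} {m₁ : X → X → X} {m₂ : Y → Y → Y} {φ : X → Y}
    (hφ : Function.Surjective φ) (hom : ∀ x y, φ (m₁ x y) = m₂ (φ x) (φ y))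
    (h : ∀ x y z, m₁ (m₁ x y) z = m₁ x (m₁ y z)) : ∀ x y z, m₂ (m₂ x y) z = m₂ x (m₂ y z) :=
  hφ.forall₃.2 fun x y z => by simp only [← hom, h]

theorem mul_mul_eq_iff_of_mem_center {N : Type*} [Group N] {f β β' a b e : N}
    (hβ : β ∈ center N) (ha : a ∈ center N) (hb : b ∈ center N) (he : e ∈ center N) :
    f * β' * e = a * b * (f * β) ↔ β⁻¹ * β' = b * e⁻¹ * a := by
  lift a to center N using ha
  lift b to center N using hb
  lift β to center N using hβ
  lift e to center N using he
  have hcomm : ((a * b : center N) : N) * f = f * (a * b : center N) := (a * b).2.comm f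
  have hperm : a * b * β * e⁻¹ = β * (b * e⁻¹ * a) := by ac_rfl
  rw [← coe_mul, ← mul_assoc, hcomm, mul_assoc f, mul_assoc, mul_right_inj,
    ← eq_mul_inv_iff_mul_eq, inv_mul_eq_iff_eq_mul, ← coe_mul, ← coe_inv, ← coe_mul, hperm]
  simp only [coe_mul, coe_inv]

section TwistedProduct

variable {N Q : Type*} [Group N]

def gaugeMap (c : Q → N) (x : N × Q) : N × Q :=
  (x.1 * c x.2, x.2)

theorem gaugeMap_bijective (c : Q → N) : Function.Bijective (gaugeMap c) :=
  Function.bijective_iff_has_inverse.mpr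
    ⟨fun x => (x.1 * (c x.2)⁻¹, x.2), fun x => by simp [gaugeMap], fun x => by simp [gaugeMap]⟩

variable [Monoid Q]

/-- With `ρ = Ŝ ∘ σ`, this is the product of the extension `N̂ ×_{(f,σ)} G/N`. -/
def twistedMul (ρ : Q → MulAut N) (f : Q → Q → N) (x y : N × Q) : N × Q :=
  (x.1 * ρ x.2 y.1 * f x.2 y.2, x.2 * y.2)

def IsTwistedCocycle (ρ : Q → MulAut N) (f : Q → Q → N) : Prop :=
  ∀ h h' h'', ρ h (f h' h'') * f h (h' * h'') = f h h' * f (h * h') h''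

theorem twistedMul_assoc {ρ : Q → MulAut N} {f : Q → Q → N}
    (hρ : ∀ h k m, ρ h (ρ k m) = f h k * ρ (h * k) m * (f h k)⁻¹) (hf : IsTwistedCocycle ρ f)
    (x y z : N × Q) :
    twistedMul ρ f (twistedMul ρ f x y) z = twistedMul ρ f x (twistedMul ρ f y z) := by
  refine Prod.ext ?_ (mul_assoc x.2 y.2 z.2)
  simp only [twistedMul, map_mul, hρ]
  rw [eq_inv_mul_of_mul_eq (hf x.2 y.2 z.2).symm]
  group

theorem IsTwistedCocycle.of_assoc {ρ : Q → MulAut N} {f : Q → Q → N}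
    (h : ∀ x y z, twistedMul ρ f (twistedMul ρ f x y) z = twistedMul ρ f x (twistedMul ρ f y z)) :
    IsTwistedCocycle ρ f := fun a b c => by
  simpa [twistedMul] using (congrArg Prod.fst (h (1, a) (1, b) (1, c))).symm

theorem IsTwistedCocycle.mul_iff {ρ : Q → MulAut N} {f β : Q → Q → N}
    (hf : IsTwistedCocycle ρ f) (hβ : ∀ h h', β h h' ∈ center N) :
    IsTwistedCocycle ρ (fun h h' => f h h' * β h h') ↔ IsTwistedCocycle ρ β := by
  refine forall₃_congr fun h h' h'' => ?_
  beta_reduce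
  rw [map_mul, ((MulEquivClass.apply_mem_center (ρ h) (hβ h' h'')).comm _).mul_mul_mul_comm,
    ((hβ h h').comm _).mul_mul_mul_comm, hf, mul_right_inj]

theorem gaugeMap_hom_iff {ρ₁ ρ₂ : Q → MulAut N} {f₁ f₂ : Q → Q → N} {c : Q → N}
    (hρ : ∀ h m, ρ₂ h m = c h * ρ₁ h m * (c h)⁻¹) :
    (∀ x y, gaugeMap c (twistedMul ρ₂ f₂ x y) = twistedMul ρ₁ f₁ (gaugeMap c x) (gaugeMap c y)) ↔
      ∀ h k, f₂ h k * c (h * k) = c h * ρ₁ h (c k) * f₁ h k := by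
  constructor
  · intro hom h k
    simpa [gaugeMap, twistedMul] using congrArg Prod.fst (hom (1, h) (1, k))
  · intro hc x y
    refine Prod.ext ?_ rfl
    simp only [gaugeMap, twistedMul, map_mul, hρ]
    rw [mul_assoc _ (f₂ x.2 y.2), hc]
    group

theorem eq_gaugeMap_of_hom {ρ₁ ρ₂ : Q → MulAut N} {f₁ f₂ : Q → Q → N} {φ : N × Q → N × Q}
    (hρ₁ : ρ₁ 1 = 1) (hf₁ : ∀ h, f₁ 1 h = 1) (hf₂ : ∀ h, f₂ 1 h = 1)
    (hom : ∀ x y, φ (twistedMul ρ₂ f₂ x y) = twistedMul ρ₁ f₁ (φ x) (φ y))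
    (hfix : ∀ n, φ (n, 1) = (n, 1)) (hsnd : ∀ h, (φ (1, h)).2 = h) :
    φ = gaugeMap fun h => (φ (1, h)).1 := by
  ext1 ⟨n, h⟩
  have hφ1 : φ (1, h) = ((φ (1, h)).1, h) := Prod.ext rfl (hsnd h)
  calc φ (n, h) = φ (twistedMul ρ₂ f₂ (n, 1) (1, h)) := by simp [twistedMul, hf₂]
    _ = twistedMul ρ₁ f₁ (n, 1) ((φ (1, h)).1, h) := by rw [hom, hfix, ← hφ1]
    _ = gaugeMap (fun h => (φ (1, h)).1) (n, h) := by simp [twistedMul, gaugeMap, hρ₁, hf₁]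

end TwistedProduct

section CrossedModule

variable {N G Q : Type*} [Group N] [Group G] {α : N →* G} {S : G →* MulAut N}

theorem ker_le_center (cm2 : ∀ y x : N, S (α y) x = y * x * y⁻¹) : α.ker ≤ center N :=
  fun z hz => mem_center_iff.mpr fun x => by
    have hx : x = z * x * z⁻¹ := by rw [← cm2, MonoidHom.mem_ker.mp hz, map_one, MulAut.one_apply]
    exact eq_mul_inv_iff_mul_eq.mp hx

theorem apply_map_mul_apply (cm2 : ∀ y x : N, S (α y) x = y * x * y⁻¹) (y : N) (g : G) (x : N) :
    S (α y * g) x = y * S g x * y⁻¹ := by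
  rw [map_mul, MulAut.mul_apply, cm2]

variable [Monoid Q]

variable (α S) in
def IsNormalizedCocycle (σ : Q → G) (β : Q → Q → N) : Prop :=
  (∀ h h', β h h' ∈ α.ker) ∧ (∀ h, β 1 h = 1 ∧ β h 1 = 1) ∧ IsTwistedCocycle (fun h => S (σ h)) β

variable (α S) in
def IsNormalizedCoboundary (σ : Q → G) (β : Q → Q → N) : Prop :=
  ∃ c : Q → N, (∀ h, c h ∈ α.ker) ∧ c 1 = 1 ∧
    ∀ h h', β h h' = S (σ h) (c h') * (c (h * h'))⁻¹ * c h

variable (α S) in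
def ExtensionEquiv (σ₁ : Q → G) (f₁ : Q → Q → N) (σ₂ : Q → G) (f₂ : Q → Q → N) : Prop :=
  ∃ φ : N × Q → N × Q, Function.Bijective φ ∧
    (∀ x y, φ (twistedMul (fun h => S (σ₂ h)) f₂ x y) =
      twistedMul (fun h => S (σ₁ h)) f₁ (φ x) (φ y)) ∧
    (∀ n : N, φ (n, 1) = (n, 1)) ∧
    ∀ x : N × Q, α (φ x).1 * σ₁ (φ x).2 = α x.1 * σ₂ x.2

theorem extensionEquiv_of_gauge (cm2 : ∀ y x : N, S (α y) x = y * x * y⁻¹)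
    {σ₁ σ₂ : Q → G} {f₁ f₂ : Q → Q → N} {c : Q → N} (hc1 : c 1 = 1)
    (hσ : ∀ h, α (c h) * σ₁ h = σ₂ h)
    (hf : ∀ h k, f₂ h k * c (h * k) = c h * S (σ₁ h) (c k) * f₁ h k) :
    ExtensionEquiv α S σ₁ f₁ σ₂ f₂ := by
  refine ⟨gaugeMap c, gaugeMap_bijective c, (gaugeMap_hom_iff fun h m => ?_).2 hf,
    fun n => by simp [gaugeMap, hc1], fun x => by simp [gaugeMap, mul_assoc, hσ]⟩
  rw [← hσ, apply_map_mul_apply cm2]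

theorem ExtensionEquiv.isTwistedCocycle (cm2 : ∀ y x : N, S (α y) x = y * x * y⁻¹)
    {σ₁ σ₂ : Q → G} {f₁ f₂ : Q → Q → N} (he : ExtensionEquiv α S σ₁ f₁ σ₂ f₂)
    (hα₂ : ∀ h h', α (f₂ h h') = σ₂ h * σ₂ h' * (σ₂ (h * h'))⁻¹)
    (hf₂ : IsTwistedCocycle (fun h => S (σ₂ h)) f₂) : IsTwistedCocycle (fun h => S (σ₁ h)) f₁ := by
  obtain ⟨φ, hφ, hom, -, -⟩ := he
  refine .of_assoc (assoc_of_surjective_hom hφ.2 hom (twistedMul_assoc (fun h k m => ?_) hf₂))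
  have hσ₂ : σ₂ h * σ₂ k = α (f₂ h k) * σ₂ (h * k) := by rw [hα₂]; group
  rw [← MulAut.mul_apply, ← map_mul, hσ₂, apply_map_mul_apply cm2]

end CrossedModule

section QuotientSections

variable {N G : Type*} [Group N] [Group G] {α : N →* G} {S : G →* MulAut N} [α.range.Normal]

variable (α S) in
def IsStructuralCocycle (σ : G ⧸ α.range → G) (f : G ⧸ α.range → G ⧸ α.range → N) : Prop :=
  (∀ h, (σ h : G ⧸ α.range) = h) ∧ σ 1 = 1 ∧ (∀ h, f 1 h = 1 ∧ f h 1 = 1) ∧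
    (∀ h h', α (f h h') = σ h * σ h' * (σ (h * h'))⁻¹) ∧ IsTwistedCocycle (fun h => S (σ h)) f

theorem exists_map_mul_eq_of_sections {σ σ' : G ⧸ α.range → G}
    (hσ : ∀ h, (σ h : G ⧸ α.range) = h) (hσ' : ∀ h, (σ' h : G ⧸ α.range) = h)
    (hσ1 : σ 1 = 1) (hσ'1 : σ' 1 = 1) :
    ∃ c : G ⧸ α.range → N, c 1 = 1 ∧ ∀ h, α (c h) * σ h = σ' h := by
  have hmem : ∀ h, ∃ n, α n = σ' h * (σ h)⁻¹ := fun h => by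
    rw [← MonoidHom.mem_range, ← QuotientGroup.eq_one_iff, QuotientGroup.mk_mul,
      QuotientGroup.mk_inv, hσ, hσ', mul_inv_cancel]
  choose c₀ hc₀ using hmem
  have hc₀1 : α (c₀ 1) = 1 := by rw [hc₀, hσ1, hσ'1, mul_inv_cancel]
  exact ⟨fun h => c₀ h * (c₀ 1)⁻¹, mul_inv_cancel _, fun h => by simp [hc₀1, hc₀]⟩

theorem IsStructuralCocycle.mul (cm2 : ∀ y x : N, S (α y) x = y * x * y⁻¹)
    {σ : G ⧸ α.range → G} {f β : G ⧸ α.range → G ⧸ α.range → N}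
    (hf : IsStructuralCocycle α S σ f) (hβ : IsNormalizedCocycle α S σ β) :
    IsStructuralCocycle α S σ (fun h h' => f h h' * β h h') := by
  obtain ⟨hσ, hσ1, hf1, hαf, hfc⟩ := hf
  obtain ⟨hβk, hβ1, hβc⟩ := hβ
  refine ⟨hσ, hσ1, fun h => by simp [hf1, hβ1], fun h h' => ?_,
    (hfc.mul_iff fun h h' => ker_le_center cm2 (hβk h h')).2 hβc⟩
  rw [map_mul, MonoidHom.mem_ker.mp (hβk h h'), mul_one, hαf]

theorem IsStructuralCocycle.exists_extensionEquiv
    (cm1 : ∀ (g : G) (x : N), α (S g x) = g * α x * g⁻¹)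
    (cm2 : ∀ y x : N, S (α y) x = y * x * y⁻¹)
    {σ σ' : G ⧸ α.range → G} {f f' : G ⧸ α.range → G ⧸ α.range → N}
    (hf : IsStructuralCocycle α S σ f) (hf' : IsStructuralCocycle α S σ' f') :
    ∃ β, IsNormalizedCocycle α S σ β ∧
      ExtensionEquiv α S σ (fun h h' => f h h' * β h h') σ' f' := by
  obtain ⟨hσ, hσ1, hf1, hαf, hfc⟩ := hf
  obtain ⟨hσ', hσ'1, hf'1, hαf', hf'c⟩ := hf'
  obtain ⟨c, hc1, hc⟩ := exists_map_mul_eq_of_sections hσ hσ' hσ1 hσ'1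
  -- the relation of `extensionEquiv_of_gauge`, solved for `β`
  set β : G ⧸ α.range → G ⧸ α.range → N :=
    fun h k => (f h k)⁻¹ * (c h * S (σ h) (c k))⁻¹ * f' h k * c (h * k)
  have he : ExtensionEquiv α S σ (fun h k => f h k * β h k) σ' f' :=
    extensionEquiv_of_gauge cm2 hc1 hc fun h k => by simp only [β]; group
  have hβk : ∀ h k, β h k ∈ α.ker := fun h k => by
    have hc' : ∀ h, α (c h) = σ' h * (σ h)⁻¹ := fun h => eq_mul_inv_of_mul_eq (hc h)
    simp only [β, MonoidHom.mem_ker, map_mul, map_inv, hαf, hαf', cm1, hc']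
    group
  refine ⟨β, ⟨hβk, fun h => by simp [β, hf1, hf'1, hσ1, hc1], ?_⟩, he⟩
  exact (hfc.mul_iff fun h k => ker_le_center cm2 (hβk h k)).1 (he.isTwistedCocycle cm2 hαf' hf'c)

theorem extensionEquiv_iff_exists_gauge (cm2 : ∀ y x : N, S (α y) x = y * x * y⁻¹)
    {σ : G ⧸ α.range → G} {f₁ f₂ : G ⧸ α.range → G ⧸ α.range → N}
    (hσ : ∀ h, (σ h : G ⧸ α.range) = h) (hσ1 : σ 1 = 1)
    (hf₁ : ∀ h, f₁ 1 h = 1) (hf₂ : ∀ h, f₂ 1 h = 1) :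
    ExtensionEquiv α S σ f₁ σ f₂ ↔ ∃ c : G ⧸ α.range → N, (∀ h, c h ∈ α.ker) ∧ c 1 = 1 ∧
      ∀ h k, f₂ h k * c (h * k) = c h * S (σ h) (c k) * f₁ h k := by
  constructor
  · rintro ⟨φ, -, hom, hfix, hα⟩
    have hmk : ∀ n, ((α n : G) : G ⧸ α.range) = 1 := fun n =>
      (QuotientGroup.eq_one_iff _).2 ⟨n, rfl⟩
    have hsnd : ∀ x, (φ x).2 = x.2 := fun x => by
      simpa [hσ, hmk] using congrArg (QuotientGroup.mk : G → G ⧸ α.range) (hα x)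
    set c : G ⧸ α.range → N := fun h => (φ (1, h)).1
    have hck : ∀ h, c h ∈ α.ker := fun h => by
      simpa [hsnd] using hα (1, h)
    have hφ : φ = gaugeMap c :=
      eq_gaugeMap_of_hom (by simp [hσ1]) hf₁ hf₂ hom hfix fun h => hsnd (1, h)
    rw [hφ] at hom
    refine ⟨c, hck, by simp [c, hfix], (gaugeMap_hom_iff fun h m => ?_).1 hom⟩
    rw [← apply_map_mul_apply cm2, MonoidHom.mem_ker.mp (hck h), one_mul]
  · rintro ⟨c, hck, hc1, hc⟩
    exact extensionEquiv_of_gauge cm2 hc1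
      (fun h => by rw [MonoidHom.mem_ker.mp (hck h), one_mul]) hc

theorem extensionEquiv_mul_iff (cm2 : ∀ y x : N, S (α y) x = y * x * y⁻¹)
    {σ : G ⧸ α.range → G} {f β β' : G ⧸ α.range → G ⧸ α.range → N}
    (hf : IsStructuralCocycle α S σ f) (hβ : IsNormalizedCocycle α S σ β)
    (hβ' : IsNormalizedCocycle α S σ β') :
    ExtensionEquiv α S σ (fun h h' => f h h' * β h h') σ (fun h h' => f h h' * β' h h') ↔
      IsNormalizedCoboundary α S σ (fun h h' => (β h h')⁻¹ * β' h h') := by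
  obtain ⟨hσ, hσ1, hf1, -, -⟩ := hf
  have hcen := ker_le_center cm2
  rw [extensionEquiv_iff_exists_gauge cm2 hσ hσ1 (fun h => by simp [hf1, hβ.2.1])
    (fun h => by simp [hf1, hβ'.2.1])]
  refine exists_congr fun c => and_congr_right fun hck => and_congr_right fun _ =>
    forall₂_congr fun h k => mul_mul_eq_iff_of_mem_center (hcen (hβ.1 h k)) (hcen (hck h))
      (MulEquivClass.apply_mem_center (S (σ h)) (hcen (hck k))) (hcen (hck (h * k)))

end QuotientSections

/-- for a crossed module `(α, Ŝ)` admitting an extension (represented by a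
structural cocycle `(f,σ)`), the group `H²(G/N, Z)_T` acts simply transitively on the set
of equivalence classes of crossed-module extensions via `[β]·[(f,σ)] = [(f·β,σ)]`:
(1) for every cocycle `β ∈ Z²(G/N,Z)_T`, `(f·β, σ)` is again a structural cocycle;
(2) (transitivity) every extension, i.e. every structural cocycle `(f',σ')`, is equivalent
to `(f·β, σ)` for some `β ∈ Z²(G/N,Z)_T`;
(3) (well-definedness and freeness) `(f·β,σ)` and `(f·β',σ)` give equivalent extensions iff
`β⁻¹·β'` is a coboundary in `B²(G/N,Z)_T`. -/
theorem stmt_18 {Nh G : Type*} [Group Nh] [Group G]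
    (α : Nh →* G) (Sh : G →* MulAut Nh)
    (cm1 : ∀ (g : G) (x : Nh), α (Sh g x) = g * α x * g⁻¹)
    (cm2 : ∀ (y x : Nh), Sh (α y) x = y * x * y⁻¹)
    [α.range.Normal]
    -- a fixed structural cocycle (f, σ), i.e. a fixed extension of the crossed module
    (σ : G ⧸ α.range → G)
    (hσ : ∀ h, QuotientGroup.mk (σ h) = h) (hσ1 : σ 1 = 1)
    (f : G ⧸ α.range → G ⧸ α.range → Nh)
    (hf1 : ∀ h, f 1 h = 1 ∧ f h 1 = 1)
    (hαf : ∀ h h', α (f h h') = σ h * σ h' * (σ (h * h'))⁻¹)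
    (hdf : ∀ h h' h'', Sh (σ h) (f h' h'') * f h (h' * h'') = f h h' * f (h * h') h'') :
    let Q := G ⧸ α.range
    -- normalized 2-cocycles on G/N with values in Z = ker α, for the induced action T
    let Zc : (Q → Q → Nh) → Prop := fun β =>
      (∀ h h', β h h' ∈ α.ker) ∧ (∀ h, β 1 h = 1 ∧ β h 1 = 1) ∧
        (∀ h h' h'', Sh (σ h) (β h' h'') * β h (h' * h'') = β h h' * β (h * h') h'')
    -- coboundaries
    let Bc : (Q → Q → Nh) → Prop := fun β =>
      ∃ c : Q → Nh, (∀ h, c h ∈ α.ker) ∧ c 1 = 1 ∧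
        ∀ h h', β h h' = Sh (σ h) (c h') * (c (h * h'))⁻¹ * c h
    -- structural cocycles
    let SC : (Q → Q → Nh) → (Q → G) → Prop := fun f' σ' =>
      (∀ h, QuotientGroup.mk (σ' h) = h) ∧ σ' 1 = 1 ∧
        (∀ h, f' 1 h = 1 ∧ f' h 1 = 1) ∧
        (∀ h h', α (f' h h') = σ' h * σ' h' * (σ' (h * h'))⁻¹) ∧
        (∀ h h' h'', Sh (σ' h) (f' h' h'') * f' h (h' * h'') = f' h h' * f' (h * h') h'')
    -- the extension associated to a structural cocycle
    let mext : (Q → Q → Nh) → (Q → G) → (Nh × Q → Nh × Q → Nh × Q) :=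
      fun f' σ' x y => (x.1 * Sh (σ' x.2) y.1 * f' x.2 y.2, x.2 * y.2)
    -- equivalence of the crossed-module extensions given by (f₁,σ₁) and (f₂,σ₂)
    let equiv : (Q → Q → Nh) → (Q → G) → (Q → Q → Nh) → (Q → G) → Prop :=
      fun f₁ σ₁ f₂ σ₂ => ∃ φ : Nh × Q → Nh × Q,
        Function.Bijective φ ∧
        (∀ x y, φ (mext f₂ σ₂ x y) = mext f₁ σ₁ (φ x) (φ y)) ∧
        (∀ nn : Nh, φ (nn, 1) = (nn, 1)) ∧
        (∀ x : Nh × Q, α (φ x).1 * σ₁ (φ x).2 = α x.1 * σ₂ x.2)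
    -- (1) the action is defined: f·β is again a structural cocycle
    (∀ β, Zc β → SC (fun h h' => f h h' * β h h') σ) ∧
    -- (2) transitivity
    (∀ f' σ', SC f' σ' →
      ∃ β, Zc β ∧ equiv (fun h h' => f h h' * β h h') σ f' σ') ∧
    -- (3) the action descends to cohomology classes and is free
    (∀ β β', Zc β → Zc β' →
      (equiv (fun h h' => f h h' * β h h') σ (fun h h' => f h h' * β' h h') σ ↔
        Bc (fun h h' => (β h h')⁻¹ * β' h h'))) := by
  intro Q Zc Bc SC mext equiv
  have hf : IsStructuralCocycle α Sh σ f := ⟨hσ, hσ1, hf1, hαf, hdf⟩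
  exact ⟨fun β hβ => hf.mul cm2 hβ, fun f' σ' hf' => hf.exists_extensionEquiv cm1 cm2 hf',
    fun β β' hβ hβ' => extensionEquiv_mul_iff cm2 hf hβ hβ'⟩
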